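/- Assume P_x(τ_∂ < ∞) = 1 for every x ∈ χ, let λ₀ ∈ (0,1) be the spectral radius of K, assume every state is accessible from μ, and for p ∈ (0,1] let Z^p be the unique solution in [1,∞) of z = p·Σ_{s=0}^{∞} P_μ(τ_∂>s)·(1 − (1−p)/z)^{−(s+1)}. Then: (i) Z^p > (1−p)/(1−λ₀), equivalently c_p := (1 − (1−p)/Z^p)^{−1} < 1/λ₀; and (ii) for every fixed t ∈ ℕ, the normalized weight γ^p_t/Z^p = (p/Z^p)·P_μ(τ_∂>t)·c_p^{t+1} tends to 0 as p → 0⁺. -/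

import Mathlib

open Finset Filter

/-- `muK K μ t y = (μ K^t)(y) = P_μ(X_t = y, τ_∂ > t)`. -/
noncomputable def muK {χ : Type*} [Fintype χ] [DecidableEq χ]
    (K : Matrix χ χ ℝ) (μ : χ → ℝ) (t : ℕ) (y : χ) : ℝ :=
  ∑ x, μ x * (K ^ t) x y

/-- The survival probability `P_μ(τ_∂ > t) = ∑_y (μ K^t)(y)`. -/
noncomputable def survM {χ : Type*} [Fintype χ] [DecidableEq χ]
    (K : Matrix χ χ ℝ) (μ : χ → ℝ) (t : ℕ) : ℝ :=
  ∑ y, muK K μ t y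

/-- `l` is the spectral radius of the real matrix `K`: the maximum modulus of its
complex eigenvalues. -/
def IsSpectralRadius {χ : Type*} [Fintype χ] [DecidableEq χ]
    (K : Matrix χ χ ℝ) (l : ℝ) : Prop :=
  (∀ z ∈ spectrum ℂ (K.map Complex.ofReal), ‖z‖ ≤ l) ∧
  (∃ z ∈ spectrum ℂ (K.map Complex.ofReal), ‖z‖ = l)


section aux
variable {χ : Type*} [Fintype χ] [DecidableEq χ] (K : Matrix χ χ ℝ) (μ : χ → ℝ)

lemma pow_entry_nonneg (hK0 : ∀ x y, 0 ≤ K x y) : ∀ s x y, 0 ≤ (K ^ s) x y := by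
  intro s
  induction s with
  | zero => intro x y; rw [pow_zero]; by_cases h : x = y <;> simp [Matrix.one_apply, h]
  | succ n ih =>
    intro x y
    rw [pow_succ, Matrix.mul_apply]
    exact Finset.sum_nonneg fun z _ => mul_nonneg (ih x z) (hK0 z y)

lemma muK_nonneg (hK0 : ∀ x y, 0 ≤ K x y) (hμ0 : ∀ x, 0 ≤ μ x) (t : ℕ) (y : χ) :
    0 ≤ muK K μ t y :=
  Finset.sum_nonneg fun x _ => mul_nonneg (hμ0 x) (pow_entry_nonneg K hK0 t x y)

lemma survM_nonneg (hK0 : ∀ x y, 0 ≤ K x y) (hμ0 : ∀ x, 0 ≤ μ x) (t : ℕ) :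
    0 ≤ survM K μ t :=
  Finset.sum_nonneg fun y _ => muK_nonneg K μ hK0 hμ0 t y

lemma muK_add (t s : ℕ) (y : χ) :
    muK K μ (t + s) y = ∑ x, muK K μ t x * (K ^ s) x y := by
  unfold muK
  simp only [pow_add, Matrix.mul_apply, Finset.mul_sum, Finset.sum_mul]
  rw [Finset.sum_comm]
  refine Finset.sum_congr rfl fun z _ => Finset.sum_congr rfl fun w _ => by ring

lemma survM_add_ge (hK0 : ∀ x y, 0 ≤ K x y) (hμ0 : ∀ x, 0 ≤ μ x) (t s : ℕ) (x : χ) :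
    muK K μ t x * (∑ y, (K ^ s) x y) ≤ survM K μ (t + s) := by
  unfold survM
  rw [Finset.mul_sum]
  refine Finset.sum_le_sum fun y _ => ?_
  rw [muK_add]
  exact Finset.single_le_sum
    (fun z _ => mul_nonneg (muK_nonneg K μ hK0 hμ0 t z) (pow_entry_nonneg K hK0 s z y))
    (mem_univ x)

end aux

attribute [local instance] Matrix.linftyOpNormedRing Matrix.linftyOpNormedAlgebra

lemma spec_low {χ : Type*} [Fintype χ] [Nonempty χ] [DecidableEq χ]
    (K : Matrix χ χ ℝ) (hK0 : ∀ x y, 0 ≤ K x y) (lam : ℝ)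
    (hspec : ∃ z ∈ spectrum ℂ (K.map Complex.ofReal), ‖z‖ = lam) (s : ℕ) :
    lam ^ s ≤ ∑ x, ∑ y, (K ^ s) x y := by
  have hK0' := pow_entry_nonneg K hK0
  obtain ⟨z, hz, habs⟩ := hspec
  have hzs : z ^ s ∈ spectrum ℂ ((K.map Complex.ofReal) ^ s) :=
    spectrum.pow_image_subset _ s ⟨z, hz, rfl⟩
  have h1 : ‖z ^ s‖ ≤ ‖(K.map Complex.ofReal) ^ s‖ := spectrum.norm_le_norm_of_mem hzs
  have hmap : (K.map Complex.ofReal) ^ s = (K ^ s).map Complex.ofReal := by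
    exact (map_pow (Complex.ofRealHom.mapMatrix) K s).symm
  rw [hmap] at h1
  have h2 : ‖(K ^ s).map Complex.ofReal‖ ≤ ∑ x, ∑ y, (K ^ s) x y := by
    rw [Matrix.linfty_opNorm_def]
    obtain ⟨i, -, hi⟩ := Finset.exists_mem_eq_sup (univ : Finset χ) univ_nonempty
      (fun i => ∑ j, ‖((K ^ s).map Complex.ofReal) i j‖₊)
    rw [hi]
    push_cast
    have : ∀ j, ‖((K ^ s).map Complex.ofReal) i j‖ = (K ^ s) i j := by
      intro j
      simp [Matrix.map_apply, abs_of_nonneg (hK0' s i j)]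
    rw [Finset.sum_congr rfl fun j _ => this j]
    exact Finset.single_le_sum (fun x _ => Finset.sum_nonneg fun y _ => hK0' s x y) (mem_univ i)
  calc lam ^ s = ‖z ^ s‖ := by rw [norm_pow, habs]
    _ ≤ _ := le_trans h1 h2

/-- Key lemma: if `∑ surv(s) c^(s+1)` is summable with `c ≥ 1` then `c < 1/lam`. -/
lemma c_lt_inv_lam {χ : Type*} [Fintype χ] [Nonempty χ] [DecidableEq χ]
    (K : Matrix χ χ ℝ) (hK0 : ∀ x y, 0 ≤ K x y)
    (μ : χ → ℝ) (hμ0 : ∀ x, 0 ≤ μ x)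
    (lam : ℝ) (hlam0 : 0 < lam)
    (hspec : ∃ z ∈ spectrum ℂ (K.map Complex.ofReal), ‖z‖ = lam)
    (hacc : ∀ x : χ, ∃ t : ℕ, 0 < muK K μ t x)
    {c : ℝ} (hc1 : 1 ≤ c)
    (hsum : Summable (fun s : ℕ => survM K μ s * c ^ (s + 1))) : c < 1 / lam := by
  by_contra hcon
  push_neg at hcon
  have hli : 0 < lam⁻¹ := inv_pos.mpr hlam0
  have hlc : lam⁻¹ ≤ c := by rwa [one_div] at hcon
  have hlne : lam ≠ 0 := ne_of_gt hlam0
  have h1 : Tendsto (fun s : ℕ => survM K μ s * c ^ (s + 1)) atTop (nhds 0) :=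
    hsum.tendsto_atTop_zero
  have hs0 := survM_nonneg K μ hK0 hμ0
  have h2 : Tendsto (fun s : ℕ => survM K μ s * lam⁻¹ ^ (s + 1)) atTop (nhds 0) := by
    refine squeeze_zero (fun s => mul_nonneg (hs0 s) (pow_nonneg hli.le _)) (fun s => ?_) h1
    exact mul_le_mul_of_nonneg_left (pow_le_pow_left₀ hli.le hlc _) (hs0 s)
  set r : χ → ℕ → ℝ := fun x s => ∑ y, (K ^ s) x y with hr
  have hr0 : ∀ x s, 0 ≤ r x s := fun x s =>
    Finset.sum_nonneg fun y _ => pow_entry_nonneg K hK0 s x y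
  have h4 : ∀ x : χ, Tendsto (fun s : ℕ => r x s * lam⁻¹ ^ s) atTop (nhds 0) := by
    intro x
    obtain ⟨t₀, ha⟩ := hacc x
    have h3 : Tendsto (fun s : ℕ => survM K μ (t₀ + s) * lam⁻¹ ^ (t₀ + s + 1)) atTop (nhds 0) := by
      have := h2.comp (tendsto_add_atTop_nat t₀)
      refine this.congr fun s => ?_
      simp only [Function.comp_apply]
      rw [add_comm s t₀]
    have h3' : Tendsto (fun s : ℕ => survM K μ (t₀ + s) * lam⁻¹ ^ s) atTop (nhds 0) := by
      have h := h3.const_mul (lam ^ (t₀ + 1))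
      rw [mul_zero] at h
      refine h.congr fun s => ?_
      have hpow : lam ^ (t₀ + 1) * lam⁻¹ ^ (t₀ + s + 1) = lam⁻¹ ^ s := by
        have he : lam⁻¹ ^ (t₀ + s + 1) = lam⁻¹ ^ (t₀ + 1) * lam⁻¹ ^ s := by
          rw [← pow_add, show t₀ + 1 + s = t₀ + s + 1 from by ring]
        rw [he, ← mul_assoc, ← mul_pow, mul_inv_cancel₀ hlne, one_pow, one_mul]
      calc lam ^ (t₀ + 1) * (survM K μ (t₀ + s) * lam⁻¹ ^ (t₀ + s + 1))
          = survM K μ (t₀ + s) * (lam ^ (t₀ + 1) * lam⁻¹ ^ (t₀ + s + 1)) := by ring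
        _ = survM K μ (t₀ + s) * lam⁻¹ ^ s := by rw [hpow]
    have h := h3'.const_mul (muK K μ t₀ x)⁻¹
    rw [mul_zero] at h
    refine squeeze_zero (fun s => mul_nonneg (hr0 x s) (pow_nonneg hli.le _)) (fun s => ?_) h
    have hle : muK K μ t₀ x * r x s ≤ survM K μ (t₀ + s) := survM_add_ge K μ hK0 hμ0 t₀ s x
    have : r x s ≤ (muK K μ t₀ x)⁻¹ * survM K μ (t₀ + s) := by
      rw [← mul_le_mul_iff_of_pos_left ha, ← mul_assoc, mul_inv_cancel₀ (ne_of_gt ha), one_mul]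
      exact hle
    calc r x s * lam⁻¹ ^ s ≤ ((muK K μ t₀ x)⁻¹ * survM K μ (t₀ + s)) * lam⁻¹ ^ s :=
          mul_le_mul_of_nonneg_right this (pow_nonneg hli.le _)
      _ = (muK K μ t₀ x)⁻¹ * (survM K μ (t₀ + s) * lam⁻¹ ^ s) := by ring
  have hS : Tendsto (fun s : ℕ => (∑ x, r x s) * lam⁻¹ ^ s) atTop (nhds 0) := by
    have := tendsto_finset_sum (univ : Finset χ) (fun x _ => h4 x)
    simpa [Finset.sum_mul] using this
  have hge : ∀ s : ℕ, (1 : ℝ) ≤ (∑ x, r x s) * lam⁻¹ ^ s := by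
    intro s
    have hlow := spec_low K hK0 lam hspec s
    calc (1 : ℝ) = lam ^ s * lam⁻¹ ^ s := by
          rw [← mul_pow, mul_inv_cancel₀ hlne, one_pow]
      _ ≤ (∑ x, r x s) * lam⁻¹ ^ s :=
          mul_le_mul_of_nonneg_right hlow (pow_nonneg hli.le _)
  have : (1 : ℝ) ≤ 0 := ge_of_tendsto hS (Eventually.of_forall hge)
  linarith

/-- Suppose killing is a.s., `λ₀ ∈ (0,1)` is the spectral radius of `K`, every state is
accessible from `μ`, and for `p ∈ (0,1]` let `Z^p = Zsel p` be the unique solution in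
`[1,∞)` of the infinite-horizon fixed point equation, `c_p = (1 − (1−p)/Z^p)⁻¹`. Then
(i) `Z^p > (1−p)/(1−λ₀)`, equivalently `c_p < 1/λ₀`; and (ii) for every fixed `t`,
`γ^p_t/Z^p = (p/Z^p)·P_μ(τ_∂>t)·c_p^{t+1} → 0` as `p → 0⁺`. -/

theorem Zp_above_threshold_and_normalized_weights_vanish
    {χ : Type*} [Fintype χ] [Nonempty χ] [DecidableEq χ]
    (K : Matrix χ χ ℝ) (hK0 : ∀ x y, 0 ≤ K x y) (hK1 : ∀ x, ∑ y, K x y ≤ 1)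
    (μ : χ → ℝ) (hμ0 : ∀ x, 0 ≤ μ x) (hμ1 : ∑ x, μ x = 1)
    (hkill : ∀ x : χ, Filter.Tendsto (fun t => ∑ y, (K ^ t) x y) Filter.atTop (nhds 0))
    (lam : ℝ) (hlam0 : 0 < lam) (hlam1 : lam < 1) (hspec : IsSpectralRadius K lam)
    (hacc : ∀ x : χ, ∃ t : ℕ, 0 < muK K μ t x)
    (Zsel : ℝ → ℝ)
    (hZsel : ∀ p ∈ Set.Ioc (0 : ℝ) 1,
      1 ≤ Zsel p ∧
      Summable (fun s : ℕ => survM K μ s * ((1 - (1 - p) / Zsel p)⁻¹) ^ (s + 1)) ∧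
      Zsel p = p * ∑' s : ℕ, survM K μ s * ((1 - (1 - p) / Zsel p)⁻¹) ^ (s + 1)) :
    (∀ p ∈ Set.Ioc (0 : ℝ) 1,
      (1 - p) / (1 - lam) < Zsel p ∧ (1 - (1 - p) / Zsel p)⁻¹ < 1 / lam) ∧
    (∀ t : ℕ,
      Filter.Tendsto
        (fun p : ℝ => (p / Zsel p) * survM K μ t * ((1 - (1 - p) / Zsel p)⁻¹) ^ (t + 1))
        (nhdsWithin 0 (Set.Ioc (0 : ℝ) 1)) (nhds 0)) := by
  have hspec2 : ∃ z ∈ spectrum ℂ (K.map Complex.ofReal), ‖z‖ = lam := hspec.2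
  have key : ∀ p ∈ Set.Ioc (0 : ℝ) 1,
      (1 - p) / (1 - lam) < Zsel p ∧ (1 - (1 - p) / Zsel p)⁻¹ < 1 / lam := by
    intro p hp
    obtain ⟨hZ1, hsum, -⟩ := hZsel p hp
    have hZpos : (0 : ℝ) < Zsel p := lt_of_lt_of_le one_pos hZ1
    have h1p : 0 ≤ 1 - p := by linarith [hp.2]
    have hq : (1 - p) / Zsel p < 1 :=
      lt_of_le_of_lt (div_le_self h1p hZ1) (by linarith [hp.1])
    have hu : 0 < 1 - (1 - p) / Zsel p := by linarith
    have hule : 1 - (1 - p) / Zsel p ≤ 1 := by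
      have : 0 ≤ (1 - p) / Zsel p := div_nonneg h1p hZpos.le
      linarith
    have hc1 : 1 ≤ (1 - (1 - p) / Zsel p)⁻¹ := (one_le_inv₀ hu).mpr hule
    have hclt : (1 - (1 - p) / Zsel p)⁻¹ < 1 / lam :=
      c_lt_inv_lam K hK0 μ hμ0 lam hlam0 hspec2 hacc hc1 hsum
    refine ⟨?_, hclt⟩
    have hlamu : lam < 1 - (1 - p) / Zsel p := by
      rw [one_div] at hclt
      exact (inv_lt_inv₀ hu hlam0).mp hclt
    have h3 : (1 - p) / Zsel p < 1 - lam := by linarith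
    have h4 : 1 - p < (1 - lam) * Zsel p := (div_lt_iff₀ hZpos).mp h3
    exact (div_lt_iff₀ (by linarith : (0:ℝ) < 1 - lam)).mpr (by nlinarith)
  refine ⟨key, fun t => ?_⟩
  have hsurv := survM_nonneg K μ hK0 hμ0 t
  have hli : (0:ℝ) < lam⁻¹ := inv_pos.mpr hlam0
  have hg : Tendsto (fun p : ℝ => p * (survM K μ t * lam⁻¹ ^ (t + 1)))
      (nhdsWithin 0 (Set.Ioc (0:ℝ) 1)) (nhds 0) := by
    have : Tendsto (fun p : ℝ => p * (survM K μ t * lam⁻¹ ^ (t + 1))) (nhds 0)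
        (nhds (0 * (survM K μ t * lam⁻¹ ^ (t + 1)))) :=
      (continuous_id.mul continuous_const).tendsto 0
    rw [zero_mul] at this
    exact this.mono_left nhdsWithin_le_nhds
  have hev : ∀ᶠ p in nhdsWithin 0 (Set.Ioc (0:ℝ) 1), p ∈ Set.Ioc (0:ℝ) 1 :=
    eventually_mem_nhdsWithin
  refine squeeze_zero' (hev.mono fun p hp => ?_) (hev.mono fun p hp => ?_) hg
  · obtain ⟨hZ1, -, -⟩ := hZsel p hp
    have hZpos : (0 : ℝ) < Zsel p := lt_of_lt_of_le one_pos hZ1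
    have hu : 0 < 1 - (1 - p) / Zsel p := by
      have hq : (1 - p) / Zsel p < 1 :=
        lt_of_le_of_lt (div_le_self (by linarith [hp.2]) hZ1) (by linarith [hp.1])
      linarith
    exact mul_nonneg (mul_nonneg (div_nonneg hp.1.le hZpos.le) hsurv)
      (pow_nonneg (inv_nonneg.mpr hu.le) _)
  · obtain ⟨hZ1, -, -⟩ := hZsel p hp
    have hZpos : (0 : ℝ) < Zsel p := lt_of_lt_of_le one_pos hZ1
    have hu : 0 < 1 - (1 - p) / Zsel p := by
      have hq : (1 - p) / Zsel p < 1 :=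
        lt_of_le_of_lt (div_le_self (by linarith [hp.2]) hZ1) (by linarith [hp.1])
      linarith
    have hcle : (1 - (1 - p) / Zsel p)⁻¹ ≤ lam⁻¹ := by
      have := (key p hp).2
      rw [one_div] at this
      exact this.le
    have h1 : p / Zsel p ≤ p := div_le_self hp.1.le hZ1
    calc p / Zsel p * survM K μ t * (1 - (1 - p) / Zsel p)⁻¹ ^ (t + 1)
        ≤ p * survM K μ t * lam⁻¹ ^ (t + 1) := by
          refine mul_le_mul (mul_le_mul_of_nonneg_right h1 hsurv)
            (pow_le_pow_left₀ (inv_nonneg.mpr hu.le) hcle _)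
            (pow_nonneg (inv_nonneg.mpr hu.le) _)
            (mul_nonneg hp.1.le hsurv)
      _ = p * (survM K μ t * lam⁻¹ ^ (t + 1)) := by ring
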